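/- arXiv:0812.0895 — 3 statements merged into one kernel-verified Lean document; each statement's English description precedes it below -/
import Mathlib

section
/- Let λ ∈ ℝ, η > 0, and let z ∈ ℝ satisfy |z|·(|λ| + 2√η) < 1. Then ∫_ℝ 1/(1 − s z) dμ_{λ,η}(s) = 2 / (1 − λz + √((1 − λz)² − 4 z² η)), where the square root is the real square root (and (1 − λz)² − 4z²η > 0 under the stated hypothesis). -/
/-!
Substituting `s = λ + 2√η t` turns the integral into
`(2/π) ∫_{-1}^{1} √(1 - t²) / (a - b t) dt` with `a = 1 - λz`, `b = 2√η z` and `|b| < a`.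
That integral is evaluated by the fundamental theorem of calculus: the Möbius map
`t ↦ (a t - b) / (a - b t)` preserves `[-1, 1]`, and arcsin composed with it supplies the
non-elementary part of an explicit antiderivative.
-/

open MeasureTheory

/-- The semicircle law with mean `l` and variance `e`: the measure on `ℝ` with density
`s ↦ (2πe)⁻¹ √(max (4e − (s−l)², 0))` with respect to Lebesgue measure. -/
noncomputable def semicircleLaw (l e : ℝ) : Measure ℝ :=
  volume.withDensity fun s =>
    ENNReal.ofReal ((2 * Real.pi * e)⁻¹ * Real.sqrt (max (4 * e - (s - l) ^ 2) 0))

open Real intervalIntegral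

lemma sub_mul_pos_of_abs_lt {a b t : ℝ} (hab : |b| < a) (ht : |t| ≤ 1) : 0 < a - b * t := by
  have : b * t ≤ |b| := calc
    b * t ≤ |b * t| := le_abs_self _
    _ = |b| * |t| := abs_mul b t
    _ ≤ |b| := mul_le_of_le_one_right (abs_nonneg b) ht
  linarith

lemma sqrt_one_sub_sq_div_sub_mul {a b t : ℝ} (hab : |b| < a) (ht : |t| ≤ 1) :
    √(1 - ((a * t - b) / (a - b * t)) ^ 2) =
      √(a ^ 2 - b ^ 2) * √(1 - t ^ 2) / (a - b * t) := by
  have hd : 0 < a - b * t := sub_mul_pos_of_abs_lt hab ht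
  have hab2 : 0 ≤ a ^ 2 - b ^ 2 := by nlinarith [abs_lt.mp hab]
  rw [← sqrt_mul hab2, ← sqrt_sq hd.le, ← sqrt_div' _ (sq_nonneg _), sqrt_sq hd.le]
  rw [div_pow, one_sub_div (by positivity)]
  congr 1
  ring

noncomputable def semicirclePrimitive (a b t : ℝ) : ℝ :=
  (a * arcsin t - b * √(1 - t ^ 2) -
    √(a ^ 2 - b ^ 2) * arcsin ((a * t - b) / (a - b * t))) / b ^ 2

lemma hasDerivAt_semicirclePrimitive {a b t : ℝ} (hab : |b| < a) (hb : b ≠ 0)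
    (ht : t ∈ Set.Ioo (-1 : ℝ) 1) :
    HasDerivAt (semicirclePrimitive a b) (√(1 - t ^ 2) / (a - b * t)) t := by
  have h1t : 0 < 1 - t ^ 2 := by nlinarith [ht.1, ht.2]
  have ht' : |t| ≤ 1 := abs_le.2 ⟨ht.1.le, ht.2.le⟩
  have hd : 0 < a - b * t := sub_mul_pos_of_abs_lt hab ht'
  have hab2 : 0 < a ^ 2 - b ^ 2 := by nlinarith [abs_lt.mp hab]
  set S := √(1 - t ^ 2)
  set R := √(a ^ 2 - b ^ 2)
  have hS : 0 < S := sqrt_pos.2 h1t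
  have hR : 0 < R := sqrt_pos.2 hab2
  have hS2 : S ^ 2 = 1 - t ^ 2 := sq_sqrt h1t.le
  set u := (a * t - b) / (a - b * t)
  have hsqrtu : √(1 - u ^ 2) = R * S / (a - b * t) := sqrt_one_sub_sq_div_sub_mul hab ht'
  have hu : u ∈ Set.Ioo (-1 : ℝ) 1 := by
    have : 0 < 1 - u ^ 2 := by
      rw [← sqrt_pos, hsqrtu]; positivity
    constructor <;> nlinarith
  have hasin : HasDerivAt arcsin (1 / S) t := hasDerivAt_arcsin ht.1.ne' ht.2.ne
  have hsqrt : HasDerivAt (fun x => √(1 - x ^ 2)) (-(2 * t) / (2 * S)) t := by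
    have := (hasDerivAt_pow 2 t).const_sub 1
    simpa using this.sqrt h1t.ne'
  have hmoeb : HasDerivAt (fun x => (a * x - b) / (a - b * x))
      ((a * (a - b * t) - (a * t - b) * (-b)) / (a - b * t) ^ 2) t := by
    refine HasDerivAt.div ?_ ?_ hd.ne'
    · simpa using ((hasDerivAt_id t).const_mul a).sub_const b
    · simpa using ((hasDerivAt_id t).const_mul b).const_sub a
  have hasin_moeb := (hasDerivAt_arcsin hu.1.ne' hu.2.ne).comp t hmoeb
  rw [hsqrtu] at hasin_moeb
  refine (((hasin.const_mul a).sub (hsqrt.const_mul b)).sub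
    (hasin_moeb.const_mul R)).div_const (b ^ 2) |>.congr_deriv ?_
  field_simp
  linear_combination (-b ^ 2) * hS2

lemma semicirclePrimitive_one {a b : ℝ} (hab : |b| < a) :
    semicirclePrimitive a b 1 = (a - √(a ^ 2 - b ^ 2)) * (π / 2) / b ^ 2 := by
  have hd : a - b ≠ 0 := by simpa using (sub_mul_pos_of_abs_lt hab (t := 1) (by norm_num)).ne'
  rw [semicirclePrimitive, mul_one, mul_one, div_self hd]
  simp only [arcsin_one]
  ring_nf

lemma semicirclePrimitive_neg_one {a b : ℝ} (hab : |b| < a) :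
    semicirclePrimitive a b (-1) = -((a - √(a ^ 2 - b ^ 2)) * (π / 2) / b ^ 2) := by
  have hd : a - b * -1 ≠ 0 := (sub_mul_pos_of_abs_lt hab (by norm_num)).ne'
  rw [semicirclePrimitive, show a * -1 - b = -(a - b * -1) by ring, neg_div, div_self hd]
  simp only [arcsin_neg, arcsin_one]
  ring_nf

theorem integral_sqrt_one_sub_sq_div_sub_mul {a b : ℝ} (hab : |b| < a) :
    ∫ t in (-1 : ℝ)..1, √(1 - t ^ 2) / (a - b * t) = π / (a + √(a ^ 2 - b ^ 2)) := by
  have ha : 0 < a := (abs_nonneg b).trans_lt hab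
  have hab2 : 0 < a ^ 2 - b ^ 2 := by nlinarith [abs_lt.mp hab]
  have hR2 : √(a ^ 2 - b ^ 2) ^ 2 = a ^ 2 - b ^ 2 := sq_sqrt hab2.le
  rcases eq_or_ne b 0 with rfl | hb
  · simp only [zero_mul, sub_zero, ne_eq, OfNat.ofNat_ne_zero, not_false_eq_true, zero_pow,
      sqrt_sq ha.le, intervalIntegral.integral_div, integral_sqrt_one_sub_sq]
    field_simp
    ring
  have hden : ∀ t ∈ Set.Icc (-1 : ℝ) 1, a - b * t ≠ 0 := fun t ht =>
    (sub_mul_pos_of_abs_lt hab (abs_le.2 ht)).ne'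
  have hcont : ContinuousOn (semicirclePrimitive a b) (Set.Icc (-1) 1) := by
    unfold semicirclePrimitive
    refine ContinuousOn.div_const ?_ _
    fun_prop (disch := assumption)
  have hint : IntervalIntegrable (fun t => √(1 - t ^ 2) / (a - b * t)) volume (-1) 1 := by
    refine ContinuousOn.intervalIntegrable ?_
    rw [Set.uIcc_of_le (by norm_num)]
    fun_prop (disch := assumption)
  rw [integral_eq_sub_of_hasDerivAt_of_le (by norm_num) hcont
    (fun t ht => hasDerivAt_semicirclePrimitive hab hb ht) hint,
    semicirclePrimitive_one hab, semicirclePrimitive_neg_one hab]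
  have : 0 < a + √(a ^ 2 - b ^ 2) := by positivity
  field_simp
  linear_combination (-2) * hR2

theorem integral_semicircleLaw {E : Type*} [NormedAddCommGroup E] [NormedSpace ℝ E]
    (l : ℝ) {e : ℝ} (he : 0 < e) (f : ℝ → E) :
    ∫ s, f s ∂semicircleLaw l e =
      (2 / π) • ∫ t in (-1 : ℝ)..1, √(1 - t ^ 2) • f (2 * √e * t + l) := by
  set ρ : ℝ → ℝ := fun s => (2 * π * e)⁻¹ * √(max (4 * e - (s - l) ^ 2) 0)
  have hρ : Measurable fun s => (ρ s).toNNReal := by fun_prop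
  have hse : 0 < √e := sqrt_pos.2 he
  have hse2 : √e ^ 2 = e := sq_sqrt he.le
  have hvanish : ∀ s ∉ Set.Icc (2 * √e * -1 + l) (2 * √e * 1 + l), ρ s • f s = 0 := by
    intro s hs
    have : 4 * e - (s - l) ^ 2 ≤ 0 := by
      rw [Set.mem_Icc, not_and_or, not_le, not_le] at hs
      rcases hs with hs | hs <;> nlinarith
    simp [ρ, max_eq_right this]
  have hsubst : Set.EqOn (fun t => ρ (2 * √e * t + l) • f (2 * √e * t + l))
      (fun t => (π * √e)⁻¹ • √(1 - t ^ 2) • f (2 * √e * t + l))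
      (Set.uIcc (-1) 1) := by
    intro t ht
    rw [Set.uIcc_of_le (by norm_num)] at ht
    have h1t : 0 ≤ 1 - t ^ 2 := by nlinarith [ht.1, ht.2]
    have : max (4 * e - (2 * √e * t + l - l) ^ 2) 0 = (2 * √e) ^ 2 * (1 - t ^ 2) := by
      rw [max_eq_left (by nlinarith)]
      linear_combination (-4 : ℝ) * hse2
    simp only [ρ, this, sqrt_mul (sq_nonneg _), sqrt_sq (by positivity : 0 ≤ 2 * √e),
      smul_smul]
    congr 1
    field_simp
    rw [hse2]
  calc ∫ s, f s ∂semicircleLaw l e = ∫ s, ρ s • f s := by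
        change ∫ s, f s ∂volume.withDensity (fun s => ((ρ s).toNNReal : ENNReal)) = _
        rw [integral_withDensity_eq_integral_smul hρ]
        congr with s
        rw [NNReal.smul_def, Real.coe_toNNReal _ (by positivity)]
    _ = ∫ s in (2 * √e * -1 + l)..(2 * √e * 1 + l), ρ s • f s := by
        rw [← setIntegral_eq_integral_of_forall_compl_eq_zero hvanish,
          integral_Icc_eq_integral_Ioc, integral_of_le (by linarith)]
    _ = (2 * √e) • ∫ t in (-1 : ℝ)..1, ρ (2 * √e * t + l) • f (2 * √e * t + l) :=
        (smul_integral_comp_mul_add (fun s => ρ s • f s) _ _).symm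
    _ = (2 / π) • ∫ t in (-1 : ℝ)..1, √(1 - t ^ 2) • f (2 * √e * t + l) := by
        rw [integral_congr hsubst, intervalIntegral.integral_smul, smul_smul]
        congr 1
        field_simp

/-- **Cauchy-type transform of the semicircle law.** For `|z|(|λ| + 2√η) < 1`,
`∫_ℝ 1/(1 − s z) dμ_{λ,η}(s) = 2 / (1 − λz + √((1 − λz)² − 4 z² η))`,
where the square root is the real square root and `(1 − λz)² − 4z²η > 0`. -/
theorem stmt3 (l e : ℝ) (he : 0 < e) (z : ℝ)
    (hz : |z| * (|l| + 2 * Real.sqrt e) < 1) :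
    0 < (1 - l * z) ^ 2 - 4 * z ^ 2 * e ∧
      ∫ s, (1 - s * z)⁻¹ ∂(semicircleLaw l e) =
        2 / (1 - l * z + Real.sqrt ((1 - l * z) ^ 2 - 4 * z ^ 2 * e)) := by
  set a := 1 - l * z
  set b := 2 * √e * z
  have hba : |b| < a := by
    have : l * z ≤ |l| * |z| := (le_abs_self _).trans (abs_mul l z).le
    rw [abs_mul, abs_of_pos (by positivity : 0 < 2 * √e)]
    nlinarith [abs_nonneg z]
  have hdisc : a ^ 2 - 4 * z ^ 2 * e = a ^ 2 - b ^ 2 := by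
    rw [mul_pow, mul_pow, sq_sqrt he.le]; ring
  have hpos : 0 < a ^ 2 - b ^ 2 := sub_pos.2 (sq_lt_sq' (abs_lt.1 hba).1 (abs_lt.1 hba).2)
  refine ⟨hdisc ▸ hpos, ?_⟩
  have hden : ∀ t, 1 - (2 * √e * t + l) * z = a - b * t := fun t => by ring
  simp_rw [integral_semicircleLaw l he, hden, smul_eq_mul, ← div_eq_mul_inv,
    integral_sqrt_one_sub_sq_div_sub_mul hba, hdisc]
  have ha : 0 < a := (abs_nonneg b).trans_lt hba
  have : 0 < a + √(a ^ 2 - b ^ 2) := by positivity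
  field_simp
end

section
/- Let T be a locally compact, second countable Hausdorff topological space, let σ be a Radon measure on T, and let μ be a Markov kernel from T to ℝ such that for every relatively compact Borel set Δ ⊆ T there exists R > 0 with μ(t, ℝ ∖ [−R,R]) = 0 for all t ∈ Δ. Let σ̃ be the measure on T × ℝ given by σ̃(dt,ds) = σ(dt) μ(t,ds). If g ∈ L²(T × ℝ, σ̃) satisfies ∫_{Δ×ℝ} s^n g(t,s) dσ̃(t,s) = 0 for every relatively compact Borel set Δ ⊆ T and every n ∈ ℕ, then g = 0 σ̃-almost everywhere. Equivalently, the linear span of the functions (t,s) ↦ χ_Δ(t) s^n, over relatively compact Borel sets Δ ⊆ T and n ∈ ℕ, is dense in L²(T × ℝ, σ̃). -/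
/-!
Fix a compact `K ⊆ T`; the measure `σ|_K ⊗ μ` is finite and lives on `K × [-R, R]`, so `g` is
integrable there and so is every `s ^ n * g`. Disintegrating the hypothesis over `t ∈ K` shows
that for `σ`-a.e. `t ∈ K` all moments `∫ s ^ n g(t, s) μ(t, ds)` vanish. Since `μ(t, ·)` is
carried by `[-R, R]`, Weierstrass approximation upgrades this to `∫ φ(s) g(t, s) μ(t, ds) = 0`
for every continuous `φ`, so `g(t, ·) = 0` `μ(t, ·)`-a.e. Exhausting `T` by countably many
compacts gives the claim.
-/

open MeasureTheory ProbabilityTheory Filter Topology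

namespace MeasureTheory

lemma Integrable.comp_mul_of_ae_mem_Icc {X : Type*} [MeasurableSpace X] {ν : Measure X}
    {π : X → ℝ} (hπ : Measurable π) {a b : ℝ} (hmem : ∀ᵐ x ∂ν, π x ∈ Set.Icc a b)
    {f : ℝ → ℝ} (hf : Continuous f) {h : X → ℝ} (hh : Integrable h ν) :
    Integrable (fun x => f (π x) * h x) ν := by
  obtain ⟨C, hC⟩ := isCompact_Icc.exists_bound_of_continuousOn hf.continuousOn
  exact hh.bdd_mul (hf.measurable.comp hπ).aestronglyMeasurable
    (hmem.mono fun x hx => hC _ hx)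

section Moments

variable {ν : Measure ℝ} {a b : ℝ} {h : ℝ → ℝ}

lemma Integrable.continuous_mul_of_ae_mem_Icc (hmem : ∀ᵐ s ∂ν, s ∈ Set.Icc a b)
    (hh : Integrable h ν) {f : ℝ → ℝ} (hf : Continuous f) :
    Integrable (fun s => f s * h s) ν :=
  hh.comp_mul_of_ae_mem_Icc measurable_id hmem hf

lemma integral_eval_mul_eq_zero_of_moments_eq_zero (hmem : ∀ᵐ s ∂ν, s ∈ Set.Icc a b)
    (hh : Integrable h ν) (hmom : ∀ n : ℕ, ∫ s, s ^ n * h s ∂ν = 0) (p : Polynomial ℝ) :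
    ∫ s, p.eval s * h s ∂ν = 0 := by
  induction p using Polynomial.induction_on' with
  | add p q hp hq =>
    simp only [Polynomial.eval_add, add_mul]
    rw [integral_add (hh.continuous_mul_of_ae_mem_Icc hmem p.continuous)
      (hh.continuous_mul_of_ae_mem_Icc hmem q.continuous), hp, hq, add_zero]
  | monomial n c =>
    simp only [Polynomial.eval_monomial, mul_assoc, integral_const_mul, hmom, mul_zero]

lemma integral_continuous_mul_eq_zero_of_moments_eq_zero (hmem : ∀ᵐ s ∂ν, s ∈ Set.Icc a b)
    (hh : Integrable h ν) (hmom : ∀ n : ℕ, ∫ s, s ^ n * h s ∂ν = 0) {φ : ℝ → ℝ}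
    (hφ : Continuous φ) : ∫ s, φ s * h s ∂ν = 0 := by
  have hint := hh.continuous_mul_of_ae_mem_Icc hmem hφ
  have hbound : ∀ ε > 0, |∫ s, φ s * h s ∂ν| ≤ ε * ∫ s, |h s| ∂ν := by
    intro ε hε
    obtain ⟨p, hp⟩ := exists_polynomial_near_of_continuousOn a b φ hφ.continuousOn ε hε
    have hpint := hh.continuous_mul_of_ae_mem_Icc hmem p.continuous
    calc |∫ s, φ s * h s ∂ν| = |∫ s, (φ s - p.eval s) * h s ∂ν| := by
          simp_rw [sub_mul]
          rw [integral_sub hint hpint, integral_eval_mul_eq_zero_of_moments_eq_zero hmem hh hmom,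
            sub_zero]
      _ ≤ ∫ s, |(φ s - p.eval s) * h s| ∂ν := abs_integral_le_integral_abs
      _ ≤ ∫ s, ε * |h s| ∂ν := by
          refine integral_mono_ae ?_ (hh.abs.const_mul ε) ?_
          · simpa only [sub_mul, Pi.sub_apply] using (hint.sub hpint).abs
          filter_upwards [hmem] with s hs
          rw [abs_mul, abs_sub_comm]
          exact mul_le_mul_of_nonneg_right (hp s hs).le (abs_nonneg _)
      _ = ε * ∫ s, |h s| ∂ν := integral_const_mul ε _
  have hlim : Tendsto (fun ε => ε * ∫ s, |h s| ∂ν) (𝓝[>] 0) (𝓝 0) := by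
    simpa using ((continuous_mul_const _).tendsto (0 : ℝ)).mono_left nhdsWithin_le_nhds
  exact abs_nonpos_iff.mp (ge_of_tendsto hlim (eventually_nhdsWithin_of_forall hbound))

lemma ae_eq_zero_of_moments_eq_zero (hmem : ∀ᵐ s ∂ν, s ∈ Set.Icc a b)
    (hh : Integrable h ν) (hmom : ∀ n : ℕ, ∫ s, s ^ n * h s ∂ν = 0) : ∀ᵐ s ∂ν, h s = 0 :=
  ae_eq_zero_of_integral_contDiff_smul_eq_zero hh.locallyIntegrable fun _ hφ _ =>
    integral_continuous_mul_eq_zero_of_moments_eq_zero hmem hh hmom hφ.continuous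

end Moments

namespace Measure

variable {α β : Type*} [MeasurableSpace α] [MeasurableSpace β] {ν : Measure α} [SFinite ν]
  {κ : Kernel α β} [IsSFiniteKernel κ]

lemma compProd_restrict_left {s : Set α} (hs : MeasurableSet s) :
    ν.restrict s ⊗ₘ κ = (ν ⊗ₘ κ).restrict (s ×ˢ Set.univ) := by
  have hconst : Kernel.const Unit (ν.restrict s) = (Kernel.const Unit ν).restrict hs := by
    ext; simp [Kernel.restrict_apply]
  simp only [Measure.compProd, hconst, Kernel.compProd_restrict_left, Kernel.restrict_apply]

lemma ae_compProd_eq_zero_of_ae_ae {E : Type*} [NormedAddCommGroup E] {g : α × β → E}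
    (hg : AEStronglyMeasurable g (ν ⊗ₘ κ)) (h : ∀ᵐ a ∂ν, ∀ᵐ b ∂κ a, g (a, b) = 0) :
    ∀ᵐ p ∂(ν ⊗ₘ κ), g p = 0 := by
  have hmk : ∀ᵐ p ∂(ν ⊗ₘ κ), hg.mk g p = 0 := by
    refine ae_compProd_of_ae_ae (hg.stronglyMeasurable_mk.measurableSet_eq_fun
      stronglyMeasurable_const) ?_
    filter_upwards [h, ae_ae_of_ae_compProd hg.ae_eq_mk] with a ha hmka
    filter_upwards [ha, hmka] with b hb hmkb
    rw [← hmkb, hb]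
  filter_upwards [hmk, hg.ae_eq_mk] with p hp hgp
  rw [hgp, hp]

end Measure

variable {T : Type*} [MeasurableSpace T] {ν : Measure T} [SFinite ν] {κ : Kernel T ℝ}
  [IsSFiniteKernel κ]

lemma ae_compProd_eq_zero_of_setIntegral_moments_eq_zero {a b : ℝ}
    (hmem : ∀ᵐ p ∂(ν ⊗ₘ κ), p.2 ∈ Set.Icc a b) {g : T × ℝ → ℝ} (hg : Integrable g (ν ⊗ₘ κ))
    (hmom : ∀ s : Set T, MeasurableSet s → ∀ n : ℕ,
      ∫ p in s ×ˢ Set.univ, p.2 ^ n * g p ∂(ν ⊗ₘ κ) = 0) :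
    ∀ᵐ p ∂(ν ⊗ₘ κ), g p = 0 := by
  have hint (n : ℕ) : Integrable (fun p : T × ℝ => p.2 ^ n * g p) (ν ⊗ₘ κ) :=
    hg.comp_mul_of_ae_mem_Icc measurable_snd hmem (continuous_pow n)
  have hfiber_moments : ∀ᵐ t ∂ν, ∀ n : ℕ, ∫ s, s ^ n * g (t, s) ∂κ t = 0 := by
    refine ae_all_iff.mpr fun n => ?_
    refine (hint n).integral_compProd.ae_eq_zero_of_forall_setIntegral_eq_zero fun s hs _ => ?_
    simpa [Measure.setIntegral_compProd hs MeasurableSet.univ (hint n).integrableOn]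
      using hmom s hs n
  refine Measure.ae_compProd_eq_zero_of_ae_ae hg.1 ?_
  filter_upwards [Measure.ae_ae_of_ae_compProd hmem, hfiber_moments,
    ((Measure.integrable_compProd_iff hg.1).mp hg).1] with t hmem_t hmom_t hint_t
  exact ae_eq_zero_of_moments_eq_zero hmem_t hint_t hmom_t

lemma ae_of_forall_isCompact_ae_restrict_prod_univ {X Y : Type*}
    [TopologicalSpace X] [SigmaCompactSpace X] [MeasurableSpace X] [MeasurableSpace Y]
    {m : Measure (X × Y)} {P : X × Y → Prop}
    (h : ∀ K : Set X, IsCompact K → ∀ᵐ p ∂m.restrict (K ×ˢ Set.univ), P p) :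
    ∀ᵐ p ∂m, P p := by
  have hcover : ⋃ n, compactCovering X n ×ˢ (Set.univ : Set Y) = Set.univ := by
    rw [← Set.iUnion_prod_const, iUnion_compactCovering, Set.univ_prod_univ]
  rw [← m.restrict_univ, ← hcover, ae_restrict_iUnion_iff]
  exact fun n => h _ (isCompact_compactCovering X n)

end MeasureTheory

/-- **Totality of the functions `χ_Δ(t) sⁿ` in `L²(T × ℝ, σ̃)`**, where
`σ̃(dt,ds) = σ(dt)μ(t,ds)`. If `g ∈ L²(T × ℝ, σ̃)` satisfies
`∫_{Δ×ℝ} sⁿ g(t,s) dσ̃ = 0` for every relatively compact Borel `Δ ⊆ T` and every `n ∈ ℕ`,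
then `g = 0` `σ̃`-a.e. -/
theorem stmt7
    {T : Type*} [TopologicalSpace T] [LocallyCompactSpace T]
    [SecondCountableTopology T] [T2Space T]
    [MeasurableSpace T] [BorelSpace T]
    (σ : Measure T) [σ.Regular]
    (μ : Kernel T ℝ) [IsMarkovKernel μ]
    (hμ : ∀ Δ : Set T, MeasurableSet Δ → IsCompact (closure Δ) →
      ∃ R > (0 : ℝ), ∀ t ∈ Δ, μ t (Set.Icc (-R) R)ᶜ = 0)
    (g : T × ℝ → ℝ) (hg : MemLp g 2 (σ ⊗ₘ μ))
    (hmom : ∀ Δ : Set T, MeasurableSet Δ → IsCompact (closure Δ) → ∀ n : ℕ,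
      ∫ p in Δ ×ˢ (Set.univ : Set ℝ), p.2 ^ n * g p ∂(σ ⊗ₘ μ) = 0) :
    ∀ᵐ p ∂(σ ⊗ₘ μ), g p = 0 := by
  refine ae_of_forall_isCompact_ae_restrict_prod_univ fun K hK => ?_
  have hKm : MeasurableSet K := hK.measurableSet
  obtain ⟨R, -, hR⟩ := hμ K hKm (by rwa [hK.isClosed.closure_eq])
  have : IsFiniteMeasure (σ.restrict K) := isFiniteMeasure_restrict.mpr hK.measure_lt_top.ne
  rw [← Measure.compProd_restrict_left hKm]
  refine ae_compProd_eq_zero_of_setIntegral_moments_eq_zero (a := -R) (b := R) ?_ ?_ ?_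
  · refine Measure.ae_compProd_of_ae_ae (measurableSet_Icc.preimage measurable_snd) ?_
    exact (ae_restrict_iff' hKm).mpr (.of_forall fun t ht => mem_ae_iff.mpr (hR t ht))
  · refine MemLp.integrable one_le_two ?_
    rw [Measure.compProd_restrict_left hKm]
    exact hg.restrict _
  · intro s hs n
    rw [Measure.compProd_restrict_left hKm, Measure.restrict_restrict (hs.prod .univ),
      Set.prod_inter_prod, Set.univ_inter]
    exact hmom _ (hs.inter hKm) (hK.closure_of_subset Set.inter_subset_right) n
end

section
/- Let μ be a Borel probability measure on ℝ with compact support, let λ ∈ ℝ and η > 0, and define real polynomials p_n by p_0 = 1, p_1 = X − λ, and p_{n+1} = (X − λ)·p_n − η·p_{n−1} for n ≥ 1. If ∫_ℝ p_n(s) p_m(s) dμ(s) = 0 for all m ≠ n, then μ equals the semicircle law with mean λ and variance η. -/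
open MeasureTheory Polynomial

/-!
Orthogonality to `p₀ = 1` gives `∫ pₙ dμ = 0` for `n ≥ 1`. The same holds for the semicircle law:
after the substitution `s = λ + 2√η cos θ` its density becomes `(2/π) sin² θ`, while `pₙ` becomes
`η^(n/2) sin ((n + 1) θ) / sin θ` (a rescaled Chebyshev polynomial of the second kind), and
`sin ((n + 1) θ)` is orthogonal to `sin θ` on `[0, π]`. Since `pₙ` is monic of degree `n`, the
`pₙ` span `ℝ[X]`, so the two measures have the same moments. Both live on a common compact
interval, on which polynomials are uniformly dense among continuous functions (Weierstrass), so
they integrate every bounded continuous function alike and hence coincide.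
-/

open Set Real

section MomentDeterminacy

theorem ContinuousOn.integrable_of_ae_mem_compact {X E : Type*} [TopologicalSpace X]
    [T2Space X] [MeasurableSpace X] [OpensMeasurableSpace X] [NormedAddCommGroup E]
    {μ : Measure X} [IsFiniteMeasureOnCompacts μ] {K : Set X} {f : X → E}
    (hf : ContinuousOn f K) (hK : IsCompact K) (hμK : ∀ᵐ x ∂μ, x ∈ K) : Integrable f μ := by
  rw [← Measure.restrict_eq_self_of_ae_mem hμK]
  exact hf.integrableOn_compact hK

theorem dist_integral_le_of_ae_dist_le {X E : Type*} [MeasurableSpace X] [NormedAddCommGroup E]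
    [NormedSpace ℝ E] {μ : Measure X} [IsFiniteMeasure μ] {f g : X → E} {C : ℝ}
    (hf : Integrable f μ) (hg : Integrable g μ) (h : ∀ᵐ x ∂μ, dist (f x) (g x) ≤ C) :
    dist (∫ x, f x ∂μ) (∫ x, g x ∂μ) ≤ C * μ.real univ := by
  rw [dist_eq_norm, ← integral_sub hf hg]
  exact norm_integral_le_of_norm_le_const (h.mono fun x hx => by rwa [← dist_eq_norm])

variable {μ ν : Measure ℝ} [IsFiniteMeasure μ] [IsFiniteMeasure ν] {a b : ℝ}

theorem integral_eq_of_forall_integral_eval_eq (hμ : ∀ᵐ x ∂μ, x ∈ Icc a b)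
    (hν : ∀ᵐ x ∂ν, x ∈ Icc a b) (h : ∀ q : ℝ[X], ∫ x, q.eval x ∂μ = ∫ x, q.eval x ∂ν)
    {f : ℝ → ℝ} (hf : Continuous f) : ∫ x, f x ∂μ = ∫ x, f x ∂ν := by
  set M := μ.real univ + ν.real univ
  refine eq_of_forall_dist_le fun ε hε => ?_
  obtain ⟨q, hq⟩ := exists_polynomial_near_of_continuousOn a b f hf.continuousOn
    (ε / (M + 1)) (by positivity)
  have approx (ρ : Measure ℝ) [IsFiniteMeasure ρ] (hρ : ∀ᵐ x ∂ρ, x ∈ Icc a b) :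
      dist (∫ x, f x ∂ρ) (∫ x, q.eval x ∂ρ) ≤ ε / (M + 1) * ρ.real univ :=
    dist_integral_le_of_ae_dist_le
      (hf.continuousOn.integrable_of_ae_mem_compact isCompact_Icc hρ)
      (q.continuous.continuousOn.integrable_of_ae_mem_compact isCompact_Icc hρ)
      (hρ.mono fun x hx => by rw [dist_comm, Real.dist_eq]; exact (hq x hx).le)
  calc dist (∫ x, f x ∂μ) (∫ x, f x ∂ν)
      ≤ dist (∫ x, f x ∂μ) (∫ x, q.eval x ∂μ) + dist (∫ x, f x ∂ν) (∫ x, q.eval x ∂ν) := by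
        rw [h q]; exact dist_triangle_right _ _ _
    _ ≤ ε / (M + 1) * M := by linarith [approx μ hμ, approx ν hν]
    _ ≤ ε := by
        rw [div_mul_eq_mul_div, div_le_iff₀ (by positivity)]
        nlinarith

theorem Measure.ext_of_forall_integral_eval_eq (hμ : ∀ᵐ x ∂μ, x ∈ Icc a b)
    (hν : ∀ᵐ x ∂ν, x ∈ Icc a b) (h : ∀ q : ℝ[X], ∫ x, q.eval x ∂μ = ∫ x, q.eval x ∂ν) :
    μ = ν :=
  ext_of_forall_integral_eq_of_IsFiniteMeasure fun f =>
    integral_eq_of_forall_integral_eval_eq hμ hν h f.continuous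

theorem integral_eval_eq_of_span_eq_top (hμ : ∀ᵐ x ∂μ, x ∈ Icc a b)
    (hν : ∀ᵐ x ∂ν, x ∈ Icc a b)
    {s : Set ℝ[X]} (hs : Submodule.span ℝ s = ⊤)
    (h : ∀ q ∈ s, ∫ x, q.eval x ∂μ = ∫ x, q.eval x ∂ν) (q : ℝ[X]) :
    ∫ x, q.eval x ∂μ = ∫ x, q.eval x ∂ν := by
  have hint {ρ : Measure ℝ} [IsFiniteMeasure ρ] (hρ : ∀ᵐ x ∂ρ, x ∈ Icc a b) (q : ℝ[X]) :
      Integrable (fun x => q.eval x) ρ :=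
    q.continuous.continuousOn.integrable_of_ae_mem_compact isCompact_Icc hρ
  induction hs ▸ Submodule.mem_top (x := q) using Submodule.span_induction with
  | mem q hq => exact h q hq
  | zero => simp
  | add q r _ _ hq hr =>
    simp only [eval_add]
    rw [integral_add (hint hμ q) (hint hμ r), integral_add (hint hν q) (hint hν r), hq, hr]
  | smul c q _ hq => simp only [eval_smul, smul_eq_mul, integral_const_mul, hq]

end MomentDeterminacy

theorem Polynomial.span_range_eq_top_of_monic {R : Type*} [Ring R] {p : ℕ → R[X]}
    (hmonic : ∀ n, (p n).Monic) (hdeg : ∀ n, (p n).natDegree = n) :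
    Submodule.span R (range p) = ⊤ := by
  suffices h : ∀ N : ℕ, ∀ q : R[X], q.degree < N → q ∈ Submodule.span R (range p) from
    eq_top_iff.2 fun q _ => h _ q ((degree_lt_iff_coeff_zero _ _).2 fun m hm =>
      coeff_eq_zero_of_natDegree_lt hm)
  intro N
  induction N with
  | zero =>
    intro q hq
    rw [show q = 0 from ext fun m => (degree_lt_iff_coeff_zero q 0).1 hq m m.zero_le]
    exact zero_mem _
  | succ N ih =>
    intro q hq
    have hlower : (q - q.coeff N • p N).degree < N := by
      rw [degree_lt_iff_coeff_zero] at hq ⊢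
      intro m hm
      rcases hm.eq_or_lt with rfl | hm
      · have hlead : (p N).coeff N = 1 := by simpa [hdeg N] using (hmonic N).coeff_natDegree
        simp [hlead]
      · simp [hq m hm, coeff_eq_zero_of_natDegree_lt ((hdeg N).trans_lt hm)]
    simpa using add_mem (ih _ hlower)
      (Submodule.smul_mem _ (q.coeff N) (Submodule.subset_span ⟨N, rfl⟩))

structure HasConstantJacobiParameters {R : Type*} [CommRing R] (l e : R) (p : ℕ → R[X]) :
    Prop where
  zero : p 0 = 1
  one : p 1 = X - C l
  add_two : ∀ n, p (n + 2) = (X - C l) * p (n + 1) - C e * p n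

namespace HasConstantJacobiParameters

variable {R : Type*} [CommRing R] {l e : R} {p : ℕ → R[X]}

theorem monic_and_natDegree_eq [Nontrivial R] (hp : HasConstantJacobiParameters l e p) (n : ℕ) :
    (p n).Monic ∧ (p n).natDegree = n := by
  induction n using Nat.twoStepInduction with
  | zero => simp [hp.zero]
  | one => simp [hp.one, monic_X_sub_C]
  | more n ih₀ ih₁ =>
    have hlead : ((X - C l) * p (n + 1)).natDegree = n + 2 := by
      rw [(monic_X_sub_C l).natDegree_mul ih₁.1, natDegree_X_sub_C, ih₁.2, add_comm]
    have hlower : (C e * p n).natDegree < ((X - C l) * p (n + 1)).natDegree := by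
      rw [hlead]
      exact (natDegree_C_mul_le e (p n)).trans_lt (by omega)
    rw [hp.add_two]
    exact ⟨((monic_X_sub_C l).mul ih₁.1).sub_of_left (degree_lt_degree hlower),
      (natDegree_sub_eq_left_of_natDegree_lt hlower).trans hlead⟩

theorem span_range_eq_top [Nontrivial R] (hp : HasConstantJacobiParameters l e p) :
    Submodule.span R (range p) = ⊤ :=
  span_range_eq_top_of_monic (fun n => (hp.monic_and_natDegree_eq n).1)
    (fun n => (hp.monic_and_natDegree_eq n).2)

/-- With `e = a²`, `p` is a rescaled and shifted copy of the Chebyshev polynomials `Sₙ`, for which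
`Sₙ(2 cos θ) = sin ((n + 1) θ) / sin θ`. -/
theorem eval_add_mul {a : R} (hp : HasConstantJacobiParameters l (a ^ 2) p) (n : ℕ) (y : R) :
    (p n).eval (l + a * y) = a ^ n * (Chebyshev.S R n).eval y := by
  induction n using Nat.twoStepInduction with
  | zero => simp [hp.zero]
  | one => simp [hp.one]
  | more n ih₀ ih₁ =>
    have hS := Chebyshev.S_add_two R n
    push_cast at ih₁ ⊢
    rw [hp.add_two, hS]
    simp only [eval_sub, eval_mul, eval_X, eval_C, ih₀, ih₁]
    ring

end HasConstantJacobiParameters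

theorem integral_cos_int_mul_of_ne_zero {k : ℤ} (hk : k ≠ 0) :
    ∫ θ in 0..π, cos (k * θ) = 0 := by
  rw [intervalIntegral.integral_comp_mul_left cos (Int.cast_ne_zero.2 hk), integral_cos]
  simp [sin_int_mul_pi]

theorem integral_sin_nat_mul_mul_sin_nat_mul {m n : ℕ} (hmn : m ≠ n) :
    ∫ θ in 0..π, sin (m * θ) * sin (n * θ) = 0 := by
  have hprod (θ : ℝ) : sin (m * θ) * sin (n * θ)
      = (cos (((m - n : ℤ) : ℝ) * θ) - cos (((m + n : ℤ) : ℝ) * θ)) / 2 := by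
    push_cast
    rw [sub_mul, add_mul, cos_sub, cos_add]
    ring
  simp_rw [hprod]
  rw [intervalIntegral.integral_div, intervalIntegral.integral_sub
    (Continuous.intervalIntegrable (by fun_prop) _ _)
    (Continuous.intervalIntegrable (by fun_prop) _ _),
    integral_cos_int_mul_of_ne_zero (by omega), integral_cos_int_mul_of_ne_zero (by omega)]
  simp

noncomputable def semicircleDensity (l e s : ℝ) : ℝ :=
  (2 * π * e)⁻¹ * √(max (4 * e - (s - l) ^ 2) 0)

theorem semicircleLaw_eq_withDensity (l e : ℝ) :
    semicircleLaw l e = volume.withDensity fun s => ENNReal.ofReal (semicircleDensity l e s) :=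
  rfl

theorem continuous_semicircleDensity (l e : ℝ) : Continuous (semicircleDensity l e) := by
  unfold semicircleDensity; fun_prop

theorem semicircleDensity_nonneg (l : ℝ) {e : ℝ} (he : 0 ≤ e) (s : ℝ) :
    0 ≤ semicircleDensity l e s := by
  unfold semicircleDensity; positivity

theorem semicircleDensity_eq_zero_of_notMem_Icc {l a s : ℝ} (ha : 0 ≤ a)
    (hs : s ∉ Icc (l - 2 * a) (l + 2 * a)) : semicircleDensity l (a ^ 2) s = 0 := by
  have h : 4 * a ^ 2 - (s - l) ^ 2 ≤ 0 := by
    rw [mem_Icc, not_and_or, not_le, not_le] at hs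
    rcases hs with h | h <;> nlinarith
  simp [semicircleDensity, max_eq_right h]

theorem semicircleDensity_add_mul_cos {l a θ : ℝ} (ha : 0 < a) (hθ : θ ∈ Icc 0 π) :
    semicircleDensity l (a ^ 2) (l + 2 * a * cos θ) = sin θ / (π * a) := by
  have hsin : 0 ≤ sin θ := sin_nonneg_of_nonneg_of_le_pi hθ.1 hθ.2
  have hsq : max (4 * a ^ 2 - (l + 2 * a * cos θ - l) ^ 2) 0 = (2 * a * sin θ) ^ 2 := by
    rw [max_eq_left (by nlinarith [sin_sq_add_cos_sq θ])]
    nlinarith [sin_sq_add_cos_sq θ]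
  rw [semicircleDensity, hsq, sqrt_sq (by positivity)]
  field_simp

theorem ae_mem_Icc_semicircleLaw (l : ℝ) {a : ℝ} (ha : 0 ≤ a) :
    ∀ᵐ s ∂semicircleLaw l (a ^ 2), s ∈ Icc (l - 2 * a) (l + 2 * a) := by
  rw [semicircleLaw_eq_withDensity,
    ae_withDensity_iff (continuous_semicircleDensity l _).measurable.ennreal_ofReal]
  refine ae_of_all _ fun s hs => by_contra fun hs' => hs ?_
  rw [semicircleDensity_eq_zero_of_notMem_Icc ha hs', ENNReal.ofReal_zero]

theorem integral_semicircleLaw_s15 (l : ℝ) {a : ℝ} (ha : 0 < a) {g : ℝ → ℝ} (hg : Continuous g) :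
    ∫ s, g s ∂semicircleLaw l (a ^ 2)
      = 2 / π * ∫ θ in 0..π, sin θ ^ 2 * g (l + 2 * a * cos θ) := by
  have hd := continuous_semicircleDensity l (a ^ 2)
  have hderiv (θ : ℝ) (_ : θ ∈ uIcc 0 π) :
      HasDerivAt (fun θ => l + 2 * a * cos θ) (-(2 * a) * sin θ) θ := by
    simpa using ((hasDerivAt_cos θ).const_mul (2 * a)).const_add l
  calc ∫ s, g s ∂semicircleLaw l (a ^ 2)
      = ∫ s, semicircleDensity l (a ^ 2) s * g s := by
        rw [semicircleLaw_eq_withDensity, integral_withDensity_eq_integral_toReal_smul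
          hd.measurable.ennreal_ofReal (ae_of_all _ fun _ => ENNReal.ofReal_lt_top)]
        congr with s
        rw [ENNReal.toReal_ofReal (semicircleDensity_nonneg l (sq_nonneg a) s), smul_eq_mul]
    _ = ∫ s in l - 2 * a..l + 2 * a, semicircleDensity l (a ^ 2) s * g s := by
        rw [intervalIntegral.integral_of_le (by linarith), ← integral_Icc_eq_integral_Ioc,
          setIntegral_eq_integral_of_forall_compl_eq_zero fun s hs => ?_]
        rw [semicircleDensity_eq_zero_of_notMem_Icc ha.le hs, zero_mul]
    _ = ∫ θ in 0..π, semicircleDensity l (a ^ 2) (l + 2 * a * cos θ) * g (l + 2 * a * cos θ)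
          * (2 * a * sin θ) := by
        have hsubst := intervalIntegral.integral_comp_mul_deriv hderiv (by fun_prop) (hd.mul hg)
        simp only [cos_zero, cos_pi, mul_one, mul_neg, ← sub_eq_add_neg, Function.comp_apply,
          Pi.mul_apply] at hsubst
        rw [intervalIntegral.integral_symm, ← hsubst, ← intervalIntegral.integral_neg]
        refine intervalIntegral.integral_congr fun θ _ => ?_
        ring
    _ = 2 / π * ∫ θ in 0..π, sin θ ^ 2 * g (l + 2 * a * cos θ) := by
        rw [← intervalIntegral.integral_const_mul]
        refine intervalIntegral.integral_congr fun θ hθ => ?_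
        rw [uIcc_of_le pi_pos.le] at hθ
        rw [semicircleDensity_add_mul_cos ha hθ]
        field_simp

theorem isProbabilityMeasure_semicircleLaw (l : ℝ) {a : ℝ} (ha : 0 < a) :
    IsProbabilityMeasure (semicircleLaw l (a ^ 2)) := by
  have hmass := integral_semicircleLaw_s15 l ha (g := fun _ => (1 : ℝ)) continuous_const
  simp only [integral_const, smul_eq_mul, mul_one, integral_sin_sq, sin_zero, sin_pi] at hmass
  refine ⟨(ENNReal.toReal_eq_one_iff _).1 ?_⟩
  rw [← measureReal_def, hmass]
  field_simp
  ring

theorem HasConstantJacobiParameters.integral_eval_semicircleLaw_eq_zero {l a : ℝ} (ha : 0 < a)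
    {p : ℕ → ℝ[X]} (hp : HasConstantJacobiParameters l (a ^ 2) p) {n : ℕ} (hn : n ≠ 0) :
    ∫ s, (p n).eval s ∂semicircleLaw l (a ^ 2) = 0 := by
  have hintegrand (θ : ℝ) : sin θ ^ 2 * (p n).eval (l + 2 * a * cos θ)
      = a ^ n * (sin (((n + 1 : ℕ) : ℝ) * θ) * sin ((1 : ℕ) * θ)) := by
    have hS := Chebyshev.S_two_mul_real_cos θ n
    rw [show l + 2 * a * cos θ = l + a * (2 * cos θ) by ring, hp.eval_add_mul]
    push_cast at hS ⊢
    rw [← hS, one_mul]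
    ring
  rw [integral_semicircleLaw_s15 l ha (p n).continuous]
  simp_rw [hintegrand]
  rw [intervalIntegral.integral_const_mul, integral_sin_nat_mul_mul_sin_nat_mul (by omega)]
  simp

/-- **Characterization of the semicircle law by its Jacobi parameters.** If `μ` is a
compactly supported Borel probability measure on `ℝ` for which the polynomials defined by
`p₀ = 1`, `p₁ = X − λ`, `p_{n+1} = (X − λ)p_n − η p_{n−1}` (`λ ∈ ℝ`, `η > 0`) are pairwise
orthogonal in `L²(ℝ, μ)`, then `μ` is the semicircle law with mean `λ` and variance `η`. -/
theorem stmt15 (μ : Measure ℝ) [IsProbabilityMeasure μ]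
    (hsupp : ∃ K : Set ℝ, IsCompact K ∧ μ Kᶜ = 0)
    (l e : ℝ) (he : 0 < e) (p : ℕ → Polynomial ℝ)
    (h0 : p 0 = 1) (h1 : p 1 = X - C l)
    (hrec : ∀ n : ℕ, p (n + 2) = (X - C l) * p (n + 1) - C e * p n)
    (horth : ∀ m n : ℕ, m ≠ n → ∫ s, (p n).eval s * (p m).eval s ∂μ = 0) :
    μ = semicircleLaw l e := by
  obtain ⟨K, hK, hμK⟩ := hsupp
  obtain ⟨a, ha, rfl⟩ : ∃ a, 0 < a ∧ e = a ^ 2 := ⟨√e, sqrt_pos.2 he, (sq_sqrt he.le).symm⟩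
  have hp : HasConstantJacobiParameters l (a ^ 2) p := ⟨h0, h1, hrec⟩
  have := isProbabilityMeasure_semicircleLaw l ha
  obtain ⟨c, d, hcd⟩ := bddBelow_bddAbove_iff_subset_Icc.1
    ⟨(hK.union isCompact_Icc).bddBelow, (hK.union isCompact_Icc).bddAbove⟩
  have hμ : ∀ᵐ s ∂μ, s ∈ Icc c d :=
    Filter.mem_of_superset (mem_ae_iff.2 hμK) (subset_union_left.trans hcd)
  have hν : ∀ᵐ s ∂semicircleLaw l (a ^ 2), s ∈ Icc c d :=
    (ae_mem_Icc_semicircleLaw l ha.le).mono fun s hs => hcd (subset_union_right hs)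
  refine Measure.ext_of_forall_integral_eval_eq hμ hν fun q => ?_
  refine integral_eval_eq_of_span_eq_top hμ hν hp.span_range_eq_top ?_ q
  rintro _ ⟨n, rfl⟩
  cases n with
  | zero => simp [hp.zero]
  | succ n =>
    rw [hp.integral_eval_semicircleLaw_eq_zero ha n.succ_ne_zero]
    simpa [hp.zero] using horth 0 (n + 1) n.succ_ne_zero.symm
end
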